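/- arXiv:0809.3281 — 2 statements merged into one kernel-verified Lean document; each statement's English description precedes it below -/
import Mathlib

section
/- Let X be a reduced set of d > 1 distinct points in ℙⁿ (n ≥ 2). Then the points of X are collinear (all lie on one line) if and only if G(X) = d and M(X) = 1. -/
open MvPolynomial

/-! ### Combinatorics of binomial expansions -/

/-- The largest `m` with `C(m,d) ≤ c` (for `c,d ≥ 1`); the leading term `k_d`
of the `d`-binomial expansion of `c`. -/
def maxBinom (c d : ℕ) : ℕ := Nat.findGreatest (fun m => Nat.choose m d ≤ c) (c + d)

lemma one_le_choose_maxBinom {c d : ℕ} (hc : c ≠ 0) (hd : d ≠ 0) :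
    1 ≤ Nat.choose (maxBinom c d) d := by
  have h : d ≤ maxBinom c d :=
    Nat.le_findGreatest (Nat.le_add_left d c)
      (by simpa [Nat.choose_self] using Nat.one_le_iff_ne_zero.mpr hc)
  exact Nat.choose_pos h

/-- Macaulay's function `c ↦ c^⟨d⟩`: if `c = C(k_d,d) + C(k_{d-1},d-1) + ⋯ + C(k_δ,δ)`
is the `d`-binomial expansion of `c`, then
`macaulayFun c d = C(k_d+1,d+1) + ⋯ + C(k_δ+1,δ+1)`; and `0^⟨d⟩ = c^⟨0⟩ = 0`. -/
def macaulayFun (c d : ℕ) : ℕ :=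
  if h : c = 0 ∨ d = 0 then 0
  else
    Nat.choose (maxBinom c d + 1) (d + 1) +
      macaulayFun (c - Nat.choose (maxBinom c d) d) (d - 1)
termination_by c
decreasing_by
  push_neg at h
  have h1 := one_le_choose_maxBinom h.1 h.2
  have h2 := Nat.pos_of_ne_zero h.1
  omega

/-- Green's function `c ↦ c_⟨d⟩`: if `c = C(k_d,d) + C(k_{d-1},d-1) + ⋯ + C(k_δ,δ)`
is the `d`-binomial expansion of `c`, then
`greenFun c d = C(k_d-1,d) + ⋯ + C(k_δ-1,δ)` (with `C(i,j) = 0` for `i < j`);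
and `0_⟨d⟩ = c_⟨0⟩ = 0`. -/
def greenFun (c d : ℕ) : ℕ :=
  if h : c = 0 ∨ d = 0 then 0
  else
    Nat.choose (maxBinom c d - 1) d +
      greenFun (c - Nat.choose (maxBinom c d) d) (d - 1)
termination_by c
decreasing_by
  push_neg at h
  have h1 := one_le_choose_maxBinom h.1 h.2
  have h2 := Nat.pos_of_ne_zero h.1
  omega

/-- The list `[k_d, k_{d-1}, …, k_δ]` of the `d`-binomial expansion of `c`. -/
def binExpand (c d : ℕ) : List ℕ :=
  if h : c = 0 ∨ d = 0 then []
  else maxBinom c d :: binExpand (c - Nat.choose (maxBinom c d) d) (d - 1)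
termination_by c
decreasing_by
  push_neg at h
  have h1 := one_le_choose_maxBinom h.1 h.2
  have h2 := Nat.pos_of_ne_zero h.1
  omega

/-- The Macaulay difference list `(a_d, a_{d-1}, …, a_δ)` of `c` in degree `d`,
where `a_i = k_i - i` for the `d`-binomial expansion `c = Σ C(k_i, i)`. -/
def diffList (c d : ℕ) : List ℕ :=
  List.zipWith (fun m i => m - i) (binExpand c d) ((List.range (d + 1)).reverse)

/-- `gotzmannCoeffAux c d ℓ` is the number of entries of the Macaulay difference list
of `c` in degree `d` which are equal to `ℓ`; for `c = H_X(d)` this is `C_ℓ(X,d)`. -/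
def gotzmannCoeffAux (c d ℓ : ℕ) : ℕ := (diffList c d).count ℓ

/-! ### Hilbert functions of subschemes of projective space -/

/-- The homogeneous coordinate ring `R = k[x_0,…,x_n]` of `ℙⁿ`. -/
abbrev PR (k : Type) [Field k] (n : ℕ) := MvPolynomial (Fin (n + 1)) k

/-- The degree-`d` graded component of an ideal `I ⊆ k[x_0,…,x_n]`,
as a `k`-subspace of the polynomial ring. -/
noncomputable def idealComp {k : Type} [Field k] {n : ℕ} (I : Ideal (PR k n)) (d : ℕ) :
    Submodule k (PR k n) :=
  Submodule.restrictScalars k I ⊓ homogeneousSubmodule (Fin (n + 1)) k d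

/-- The Hilbert function of `R/I`: `hilb I d = dim_k R_d - dim_k I_d`. -/
noncomputable def hilb {k : Type} [Field k] {n : ℕ} (I : Ideal (PR k n)) (d : ℕ) : ℕ :=
  Module.finrank k (homogeneousSubmodule (Fin (n + 1)) k d) -
    Module.finrank k (idealComp I d)

/-- First difference `ΔH(d) = H(d) - H(d-1)` of the Hilbert function of `R/I`. -/
noncomputable def deltaH {k : Type} [Field k] {n : ℕ} (I : Ideal (PR k n)) (d : ℕ) : ℕ :=
  hilb I d - hilb I (d - 1)

/-- An ideal is homogeneous if it contains all homogeneous components of its elements. -/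
def IsHomog {k : Type} [Field k] {n : ℕ} (I : Ideal (PR k n)) : Prop :=
  ∀ f ∈ I, ∀ d : ℕ, MvPolynomial.homogeneousComponent d f ∈ I

/-- The irrelevant maximal ideal `(x_0, …, x_n)`. -/
noncomputable def irrel (k : Type) [Field k] (n : ℕ) : Ideal (PR k n) :=
  Ideal.span (Set.range MvPolynomial.X)

/-- The saturation `I^sat = ⋃_m (I : (x_0,…,x_n)^m)` of an ideal `I`. -/
noncomputable def satur {k : Type} [Field k] {n : ℕ} (I : Ideal (PR k n)) : Ideal (PR k n) :=
  ⨆ m : ℕ, Submodule.colon I ((irrel k n ^ m : Ideal (PR k n)) : Set (PR k n))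

/-- The saturation degree `sat(I)`: the least `r` with `I_j = (I^sat)_j` for all `j ≥ r`. -/
noncomputable def satDeg {k : Type} [Field k] {n : ℕ} (I : Ideal (PR k n)) : ℕ :=
  sInf {r : ℕ | ∀ j ≥ r, idealComp I j = idealComp (satur I) j}

/-- The Gotzmann number (persistence index) `G`: the least `d ≥ 1` such that the Hilbert
function of `R/I` has maximal growth `H(t+1) = H(t)^⟨t⟩` in every degree `t ≥ d`. -/
noncomputable def Gnum {k : Type} [Field k] {n : ℕ} (I : Ideal (PR k n)) : ℕ :=
  sInf {d : ℕ | 1 ≤ d ∧ ∀ t ≥ d, hilb I (t + 1) = macaulayFun (hilb I t) t}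

/-- The invariant `M`: the least `d ≥ 1` such that equality `ΔH(t) = H(t)_⟨t⟩`
in Green's Hyperplane Restriction Theorem holds for every degree `t ≥ d`. -/
noncomputable def Mnum {k : Type} [Field k] {n : ℕ} (I : Ideal (PR k n)) : ℕ :=
  sInf {d : ℕ | 1 ≤ d ∧ ∀ t ≥ d, deltaH I t = greenFun (hilb I t) t}

/-- The `ℓ`-th Gotzmann coefficient `C_ℓ(X)` of the subscheme defined by `I`: the number of
entries equal to `ℓ` in the (stable) Macaulay difference list of `H_X(d)`, `d ≥ G(X)`. -/
noncomputable def gotzmannCoeff {k : Type} [Field k] {n : ℕ} (I : Ideal (PR k n)) (ℓ : ℕ) : ℕ :=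
  gotzmannCoeffAux (hilb I (Gnum I + 1)) (Gnum I + 1) ℓ

/-- `X` is a hypersurface in a linear subspace of `ℙⁿ`:
`I_X = (L_1,…,L_c,F)` for linearly independent linear forms `L_i` and a form `F` of
positive degree which is a nonzerodivisor modulo `(L_1,…,L_c)`. -/
def IsHypersurfaceInLinearSubspace {k : Type} [Field k] {n : ℕ} (I : Ideal (PR k n)) : Prop :=
  ∃ (c : ℕ) (L : Fin c → PR k n) (F : PR k n) (e : ℕ),
    (∀ i, (L i).IsHomogeneous 1) ∧ LinearIndependent k L ∧
    0 < e ∧ F.IsHomogeneous e ∧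
    (∀ g : PR k n, F * g ∈ Ideal.span (Set.range L) → g ∈ Ideal.span (Set.range L)) ∧
    I = Ideal.span (Set.range L ∪ {F})

/-- Equidimensionality: all minimal primes of `I` have quotient of the same Krull dimension. -/
def IsEquidim {k : Type} [Field k] {n : ℕ} (I : Ideal (PR k n)) : Prop :=
  ∀ p ∈ I.minimalPrimes, ∀ q ∈ I.minimalPrimes,
    ringKrullDim (PR k n ⧸ p) = ringKrullDim (PR k n ⧸ q)

/-- The (affine cone) vanishing ideal of a subset of `k^{n+1}`. -/
def vanishIdeal {k : Type} [Field k] {n : ℕ} (S : Set (Fin (n + 1) → k)) : Ideal (PR k n) where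
  carrier := {f | ∀ x ∈ S, MvPolynomial.eval x f = 0}
  add_mem' := by
    intro f g hf hg x hx
    simp [map_add, hf x hx, hg x hx]
  zero_mem' := by intro x hx; simp
  smul_mem' := by
    intro c f hf x hx
    simp [smul_eq_mul, hf x hx]

/-- The affine cone over the (finite) set of points of `ℙⁿ` with homogeneous
coordinate vectors `v j`. -/
def coneOver {k : Type} [Field k] {n : ℕ} {s : ℕ} (v : Fin s → (Fin (n + 1) → k))
    (T : Set (Fin s)) : Set (Fin (n + 1) → k) :=
  {x | ∃ j ∈ T, ∃ t : k, x = t • v j}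

/-- The linear form with coefficient vector `v`. -/
noncomputable def linForm {k : Type} [Field k] {n : ℕ} (v : Fin (n + 1) → k) : PR k n :=
  ∑ j, MvPolynomial.C (v j) * MvPolynomial.X j

/-- `GenericProp k n ℓ Q` : the property `Q` holds for all tuples of `ℓ` (coefficient vectors
of) linear forms in a suitable nonempty Zariski-open subset of `(R_1)^ℓ`, i.e. on a nonempty
basic open set: the nonvanishing locus of a nonzero polynomial in the coefficients. -/
def GenericProp (k : Type) [Field k] (n ℓ : ℕ) (Q : (Fin ℓ → Fin (n + 1) → k) → Prop) : Prop :=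
  ∃ F : MvPolynomial (Fin ℓ × Fin (n + 1)) k, F ≠ 0 ∧
    ∀ M : Fin ℓ → Fin (n + 1) → k, MvPolynomial.eval (fun p => M p.1 p.2) F ≠ 0 → Q M

/-- Castelnuovo–Mumford regularity bound `reg(I) ≤ m`, via the Bayer–Stillman criterion:
there are linear forms `h_1, …, h_j` such that
`((I + (h_1,…,h_{i-1})) : h_i)_t = (I + (h_1,…,h_{i-1}))_t` for all `t ≥ m` and all `i`, and
`(I + (h_1,…,h_j))_t = R_t` for all `t ≥ m`. -/
def RegLE {k : Type} [Field k] {n : ℕ} (I : Ideal (PR k n)) (m : ℕ) : Prop :=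
  ∃ (j : ℕ) (h : Fin j → PR k n),
    (∀ i, (h i).IsHomogeneous 1) ∧
    (∀ i : Fin j, ∀ t, m ≤ t →
      idealComp (Submodule.colon (I ⊔ Ideal.span (h '' {i' | i' < i})) ((Ideal.span {h i} : Ideal (PR k n)) : Set (PR k n))) t =
        idealComp (I ⊔ Ideal.span (h '' {i' | i' < i})) t) ∧
    (∀ t, m ≤ t →
      idealComp (I ⊔ Ideal.span (Set.range h)) t = homogeneousSubmodule (Fin (n + 1)) k t)

/-! The Hilbert function of `d` points in degree `t` is the rank of evaluation at the points on
forms of degree `t`. Products of linear forms separating the points give `H(t) ≥ min(t + 1, d)`,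
with equality for collinear points since forms of degree `t` restrict to binary forms on the line.
For `H = min(t + 1, d)` the binomial expansions are trivial (`c ≤ t` is a sum of `c` terms
`C(i, i)`, and `t + 1 = C(t + 1, t)`), which gives `G = d` and `M = 1`. Conversely, `M = 1` means
equality in Green's theorem in every degree, and `(s + 1)_⟨s⟩ = 1` makes it carry `H(d - 1) = d`
down to `H(1) = 2`; but `H(1)` bounds the dimension of the span of the points, which is at least
`3` unless they are collinear. -/

lemma maxBinom_eq {c d m : ℕ} (h₁ : Nat.choose m d ≤ c) (h₂ : c < Nat.choose (m + 1) d)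
    (h₃ : m ≤ c + d) : maxBinom c d = m := by
  refine le_antisymm ?_ (Nat.le_findGreatest h₃ h₁)
  by_contra! hlt
  have hmax : Nat.choose (maxBinom c d) d ≤ c :=
    Nat.findGreatest_spec (P := fun m => Nat.choose m d ≤ c) h₃ h₁
  have : Nat.choose (m + 1) d ≤ Nat.choose (maxBinom c d) d := Nat.choose_le_choose d hlt
  omega

lemma maxBinom_of_le {c d : ℕ} (hc : 1 ≤ c) (hcd : c ≤ d) : maxBinom c d = d := by
  refine maxBinom_eq ?_ ?_ (Nat.le_add_left d c)
  · rwa [Nat.choose_self]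
  · rw [Nat.choose_succ_self_right]; omega

lemma maxBinom_succ_self {t : ℕ} (ht : 1 ≤ t) : maxBinom (t + 1) t = t + 1 := by
  obtain ⟨s, rfl⟩ := Nat.exists_eq_add_of_le' ht
  refine maxBinom_eq (Nat.choose_succ_self_right _).le ?_ (by omega)
  rw [Nat.choose_succ_succ', Nat.choose_succ_self_right]
  have := Nat.choose_pos (show s ≤ s + 2 by omega)
  omega

lemma macaulayFun_of_le (c : ℕ) : ∀ d, c ≤ d → macaulayFun c d = c := by
  induction c with
  | zero => intro d _; simp [macaulayFun]
  | succ c ih =>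
    intro d hcd
    rw [macaulayFun, dif_neg (by omega), maxBinom_of_le (by omega) hcd, Nat.choose_self,
      Nat.choose_self, Nat.add_sub_cancel, ih (d - 1) (by omega), Nat.add_comm]

lemma greenFun_of_le (c : ℕ) : ∀ d, c ≤ d → greenFun c d = 0 := by
  induction c with
  | zero => intro d _; simp [greenFun]
  | succ c ih =>
    intro d hcd
    rw [greenFun, dif_neg (by omega), maxBinom_of_le (by omega) hcd, Nat.choose_self,
      Nat.choose_eq_zero_of_lt (by omega), Nat.add_sub_cancel, ih (d - 1) (by omega)]

lemma macaulayFun_succ_self {t : ℕ} (ht : 1 ≤ t) : macaulayFun (t + 1) t = t + 2 := by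
  rw [macaulayFun, dif_neg (by omega), maxBinom_succ_self ht, Nat.choose_succ_self_right,
    Nat.choose_succ_self_right]
  simp [macaulayFun]

lemma greenFun_succ_self {t : ℕ} (ht : 1 ≤ t) : greenFun (t + 1) t = 1 := by
  rw [greenFun, dif_neg (by omega), maxBinom_succ_self ht, Nat.choose_succ_self_right]
  simp [greenFun]

section HilbertFunction

variable {k : Type} [Field k] {n d : ℕ} {I : Ideal (PR k n)}

lemma Gnum_eq_of_hilb_eq_min (hd : 1 < d) (hH : ∀ t, hilb I t = min (t + 1) d) :
    Gnum I = d := by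
  have hmem : d ∈ {e | 1 ≤ e ∧ ∀ t ≥ e, hilb I (t + 1) = macaulayFun (hilb I t) t} := by
    refine ⟨by omega, fun t ht => ?_⟩
    rw [hH, hH, min_eq_right (by omega), min_eq_right (by omega), macaulayFun_of_le d t ht]
  refine le_antisymm (Nat.sInf_le hmem) (le_csInf ⟨d, hmem⟩ ?_)
  rintro e ⟨-, he⟩
  by_contra! hlt
  obtain ⟨s, rfl⟩ := Nat.exists_eq_add_of_le' (show 1 ≤ d by omega)
  have := he s (by omega)
  rw [hH, hH, min_eq_right (by omega), min_eq_left (by omega),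
    macaulayFun_succ_self (by omega)] at this
  omega

lemma Mnum_eq_one_of_hilb_eq_min (hH : ∀ t, hilb I t = min (t + 1) d) : Mnum I = 1 := by
  have hmem : 1 ∈ {e | 1 ≤ e ∧ ∀ t ≥ e, deltaH I t = greenFun (hilb I t) t} := by
    refine ⟨le_rfl, fun t ht => ?_⟩
    rw [deltaH, hH, hH]
    rcases lt_or_ge t d with htd | htd
    · rw [min_eq_left (by omega), min_eq_left (by omega), greenFun_succ_self ht]
      omega
    · rw [min_eq_right (by omega), min_eq_right (by omega), greenFun_of_le d t htd]
      omega
  exact le_antisymm (Nat.sInf_le hmem) (le_csInf ⟨1, hmem⟩ fun e he => he.1)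

lemma deltaH_eq_greenFun_of_Mnum_eq_one (hM : Mnum I = 1) {t : ℕ} (ht : 1 ≤ t) :
    deltaH I t = greenFun (hilb I t) t := by
  have hmem := Nat.sInf_mem (Nat.nonempty_of_pos_sInf (show 0 < Mnum I by omega))
  rw [← Mnum, hM] at hmem
  exact hmem.2 t ht

lemma hilb_eq_succ_of_Mnum_eq_one (hM : Mnum I = 1) {s t : ℕ} (hts : t ≤ s) :
    hilb I s = s + 1 → hilb I t = t + 1 := by
  induction s, hts using Nat.le_induction with
  | base => exact id
  | succ s hts ih =>
    intro hs
    have hgreen := deltaH_eq_greenFun_of_Mnum_eq_one hM (show 1 ≤ s + 1 by omega)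
    rw [deltaH, hs, greenFun_succ_self (by omega), Nat.add_sub_cancel] at hgreen
    exact ih (by omega)

end HilbertFunction

namespace MvPolynomial.IsHomogeneous

variable {σ R : Type*} [Fintype σ] [CommSemiring R] {f : MvPolynomial σ R} {t : ℕ}

lemma sum_eq_of_coeff_ne_zero (hf : f.IsHomogeneous t) {α : σ →₀ ℕ} (hα : coeff α f ≠ 0) :
    ∑ i, α i = t := by
  rw [← Finsupp.degree_eq_sum]
  by_contra h
  exact hα (hf.coeff_eq_zero h)

lemma eval_smul (hf : f.IsHomogeneous t) (s : R) (x : σ → R) :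
    eval (s • x) f = s ^ t * eval x f := by
  rw [eval_eq', eval_eq', Finset.mul_sum]
  refine Finset.sum_congr rfl fun α hα => ?_
  simp only [Pi.smul_apply, smul_eq_mul, mul_pow, Finset.prod_mul_distrib,
    Finset.prod_pow_eq_pow_sum, hf.sum_eq_of_coeff_ne_zero (mem_support_iff.mp hα)]
  ring

end MvPolynomial.IsHomogeneous

instance {σ k : Type*} [Finite σ] [Field k] (t : ℕ) :
    Module.Finite k (homogeneousSubmodule σ k t) :=
  Module.Finite.iff_fg.mpr (homogeneousSubmodule_fg σ k t)

lemma exists_fin_le_span_of_finrank_le {k V : Type*} [Field k] [AddCommGroup V] [Module k V]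
    (S : Submodule k V) [FiniteDimensional k S] {r : ℕ} (hS : Module.finrank k S ≤ r) :
    ∃ w : Fin r → V, S ≤ Submodule.span k (Set.range w) := by
  let b := Module.finBasis k S
  refine ⟨fun i => if h : (i : ℕ) < Module.finrank k S then b ⟨i, h⟩ else 0, fun x hx => ?_⟩
  rw [← Submodule.coe_mk x hx, ← b.sum_repr ⟨x, hx⟩, Submodule.coe_sum]
  refine Submodule.sum_mem _ fun i _ =>
    Submodule.smul_mem _ _ (Submodule.subset_span ⟨Fin.castLE hS i, ?_⟩)
  simp

lemma three_le_finrank_span_of_not_collinear {k V ι : Type*} [Field k] [AddCommGroup V]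
    [Module k V] [Finite ι] {v : ι → V}
    (hnc : ¬ ∃ w₀ w₁ : V, ∀ j, ∃ s t : k, v j = s • w₀ + t • w₁) :
    3 ≤ Module.finrank k (Submodule.span k (Set.range v)) := by
  have := FiniteDimensional.span_of_finite k (Set.finite_range v)
  by_contra! h
  obtain ⟨w, hw⟩ := exists_fin_le_span_of_finrank_le (Submodule.span k (Set.range v))
    (show _ ≤ 2 by omega)
  refine hnc ⟨w 0, w 1, fun j => ?_⟩
  obtain ⟨c, hc⟩ := (Submodule.mem_span_range_iff_exists_fun k).mp
    (hw (Submodule.subset_span ⟨j, rfl⟩))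
  exact ⟨c 0, c 1, by rw [← hc, Fin.sum_univ_two]⟩

section Points

variable {k : Type} [Field k] {n d : ℕ}

noncomputable def evalPoints (v : Fin d → Fin (n + 1) → k) : PR k n →ₗ[k] (Fin d → k) :=
  LinearMap.pi fun j => (aeval (v j)).toLinearMap

@[simp]
lemma evalPoints_apply (v : Fin d → Fin (n + 1) → k) (f : PR k n) (j : Fin d) :
    evalPoints v f j = eval (v j) f := by
  simp [evalPoints]

lemma idealComp_vanishIdeal_coneOver (v : Fin d → Fin (n + 1) → k) (t : ℕ) :
    idealComp (vanishIdeal (coneOver v Set.univ)) t =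
      LinearMap.ker (evalPoints v) ⊓ homogeneousSubmodule (Fin (n + 1)) k t := by
  ext f
  simp only [idealComp, Submodule.mem_inf, Submodule.restrictScalars_mem, LinearMap.mem_ker,
    mem_homogeneousSubmodule]
  refine and_congr_left fun hf => ⟨fun hvan => ?_, fun hzero => ?_⟩
  · funext j
    exact hvan (v j) ⟨j, trivial, 1, (one_smul k (v j)).symm⟩
  · rintro _ ⟨j, -, s, rfl⟩
    show eval (s • v j) f = 0
    rw [hf.eval_smul, ← evalPoints_apply, hzero, Pi.zero_apply, mul_zero]

lemma hilb_vanishIdeal_coneOver (v : Fin d → Fin (n + 1) → k) (t : ℕ) :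
    hilb (vanishIdeal (coneOver v Set.univ)) t =
      Module.finrank k ((homogeneousSubmodule (Fin (n + 1)) k t).map (evalPoints v)) := by
  rw [hilb]
  set R_t := homogeneousSubmodule (Fin (n + 1)) k t
  have hrank := LinearMap.finrank_range_add_finrank_ker ((evalPoints v).domRestrict R_t)
  rw [LinearMap.range_domRestrict, LinearMap.ker_domRestrict] at hrank
  have hker : Module.finrank k (idealComp (vanishIdeal (coneOver v Set.univ)) t) =
      Module.finrank k ((LinearMap.ker (evalPoints v)).comap R_t.subtype) := by
    rw [idealComp_vanishIdeal_coneOver, inf_comm, ← Submodule.map_comap_subtype,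
      Submodule.finrank_map_subtype_eq]
  rw [hker]
  exact Nat.sub_eq_of_eq_add hrank.symm

lemma hilb_vanishIdeal_coneOver_le (v : Fin d → Fin (n + 1) → k) (t : ℕ) :
    hilb (vanishIdeal (coneOver v Set.univ)) t ≤ d := by
  rw [hilb_vanishIdeal_coneOver]
  simpa using Submodule.finrank_le ((homogeneousSubmodule (Fin (n + 1)) k t).map (evalPoints v))

lemma eval_linForm_dual (φ : Module.Dual k (Fin (n + 1) → k)) (x : Fin (n + 1) → k) :
    eval x (linForm fun j => φ fun i => if j = i then 1 else 0) = φ x := by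
  simp [linForm, φ.pi_apply_eq_sum_univ x, mul_comm]

lemma linForm_isHomogeneous (z : Fin (n + 1) → k) : (linForm z).IsHomogeneous 1 :=
  IsHomogeneous.sum _ _ _ fun i _ => isHomogeneous_C_mul_X _ i

lemma exists_linForm_eq_zero_ne_zero {S : Set (Fin (n + 1) → k)} {x : Fin (n + 1) → k}
    (hx : x ∉ Submodule.span k S) :
    ∃ z : Fin (n + 1) → k, (∀ w ∈ S, eval w (linForm z) = 0) ∧ eval x (linForm z) ≠ 0 := by
  obtain ⟨φ, hφx, hφS⟩ := Submodule.exists_dual_map_eq_bot_of_notMem hx inferInstance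
  refine ⟨_, fun w hw => ?_, by rwa [eval_linForm_dual]⟩
  rw [eval_linForm_dual]
  exact (Submodule.eq_bot_iff _).mp hφS _ (Submodule.mem_map_of_mem (Submodule.subset_span hw))

/-- A product of linear forms, one vanishing at each point of `Y` but not at `x`, padded to
degree `t` by a power of a linear form not vanishing at `x`. -/
lemma exists_isHomogeneous_eval_ne_zero_and_eq_zero {x : Fin (n + 1) → k} (hx : x ≠ 0)
    (Y : Finset (Fin (n + 1) → k)) (hY : ∀ y ∈ Y, x ∉ Submodule.span k {y}) {t : ℕ}
    (ht : Y.card ≤ t) :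
    ∃ g : PR k n, g.IsHomogeneous t ∧ eval x g ≠ 0 ∧ ∀ y ∈ Y, eval y g = 0 := by
  choose! z hz using fun y (hy : y ∈ Y) => exists_linForm_eq_zero_ne_zero (hY y hy)
  obtain ⟨z₀, -, hz₀⟩ := exists_linForm_eq_zero_ne_zero (S := ∅) (by simpa using hx)
  refine ⟨(∏ y ∈ Y, linForm (z y)) * linForm z₀ ^ (t - Y.card), ?_, ?_, fun y hy => ?_⟩
  · convert (IsHomogeneous.prod _ _ _ fun y _ => linForm_isHomogeneous (z y)).mul
      ((linForm_isHomogeneous z₀).pow (t - Y.card)) using 1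
    simp only [Finset.sum_const, smul_eq_mul, mul_one, one_mul]
    omega
  · simp only [map_mul, map_prod, map_pow]
    exact mul_ne_zero (Finset.prod_ne_zero_iff.mpr fun y hy => (hz y hy).2) (pow_ne_zero _ hz₀)
  · simp only [map_mul, map_prod]
    rw [Finset.prod_eq_zero hy ((hz y hy).1 y rfl), zero_mul]

lemma card_le_hilb_of_separating (v : Fin d → Fin (n + 1) → k) {m t : ℕ} (ι : Fin m → Fin d)
    (g : Fin m → PR k n) (hg : ∀ i, (g i).IsHomogeneous t)
    (hdiag : ∀ i, eval (v (ι i)) (g i) ≠ 0) (hoff : ∀ i l, l ≠ i → eval (v (ι l)) (g i) = 0) :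
    m ≤ hilb (vanishIdeal (coneOver v Set.univ)) t := by
  have hli : LinearIndependent k fun i => evalPoints v (g i) := by
    rw [Fintype.linearIndependent_iff]
    intro c hc i
    have hci := congrFun hc (ι i)
    simp only [Finset.sum_apply, Pi.smul_apply, evalPoints_apply, smul_eq_mul,
      Pi.zero_apply] at hci
    rwa [Finset.sum_eq_single i (fun l _ hl => by rw [hoff l i hl.symm, mul_zero]) (by simp),
      mul_eq_zero, or_iff_left (hdiag i)] at hci
  rw [hilb_vanishIdeal_coneOver]
  calc m = Module.finrank k (Submodule.span k (Set.range fun i => evalPoints v (g i))) := by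
        rw [finrank_span_eq_card hli, Fintype.card_fin]
    _ ≤ _ := Submodule.finrank_mono <| Submodule.span_le.mpr <| Set.range_subset_iff.mpr
        fun i => Submodule.mem_map_of_mem (hg i)

lemma min_le_hilb_vanishIdeal_coneOver (v : Fin d → Fin (n + 1) → k) (hv0 : ∀ j, v j ≠ 0)
    (hdist : ∀ i j, i ≠ j → ∀ s : k, v i ≠ s • v j) (t : ℕ) :
    min (t + 1) d ≤ hilb (vanishIdeal (coneOver v Set.univ)) t := by
  classical
  set m := min (t + 1) d
  let ι : Fin m → Fin d := Fin.castLE (min_le_right _ _)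
  have hsep : ∀ i, ∃ g : PR k n, g.IsHomogeneous t ∧ eval (v (ι i)) g ≠ 0 ∧
      ∀ l, l ≠ i → eval (v (ι l)) g = 0 := by
    intro i
    let Y := (Finset.univ.erase i).image (v ∘ ι)
    have hY : ∀ y ∈ Y, v (ι i) ∉ Submodule.span k {y} := by
      simp only [Y, Finset.mem_image, Finset.mem_erase]
      rintro _ ⟨l, ⟨hl, -⟩, rfl⟩ hmem
      obtain ⟨s, hs⟩ := Submodule.mem_span_singleton.mp hmem
      exact hdist (ι i) (ι l) (fun h => hl (Fin.castLE_injective _ h).symm) s hs.symm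
    have hcard : Y.card ≤ t :=
      Finset.card_image_le.trans (by simp [m])
    obtain ⟨g, hg, hgi, hgY⟩ :=
      exists_isHomogeneous_eval_ne_zero_and_eq_zero (hv0 (ι i)) Y hY hcard
    exact ⟨g, hg, hgi, fun l hl =>
      hgY _ (Finset.mem_image_of_mem _ (Finset.mem_erase.mpr ⟨hl, Finset.mem_univ l⟩))⟩
  choose g hg hdiag hoff using hsep
  exact card_le_hilb_of_separating v ι g hg hdiag hoff

lemma finrank_span_range_le_hilb_one (v : Fin d → Fin (n + 1) → k) :
    Module.finrank k (Submodule.span k (Set.range v)) ≤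
      hilb (vanishIdeal (coneOver v Set.univ)) 1 := by
  have hrank := (Matrix.of v).rank_eq_finrank_span_row.symm.trans
    (Matrix.of v).rank_eq_finrank_span_cols
  rw [hilb_vanishIdeal_coneOver]
  refine hrank.trans_le (Submodule.finrank_mono (Submodule.span_le.mpr ?_))
  rintro _ ⟨i, rfl⟩
  exact ⟨X i, isHomogeneous_X k i, funext fun j => by simp [Matrix.col]⟩

noncomputable def lineParam (w₀ w₁ : Fin (n + 1) → k) : Fin (n + 1) → MvPolynomial (Fin 2) k :=
  fun r => C (w₀ r) * X 0 + C (w₁ r) * X 1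

lemma lineParam_isHomogeneous (w₀ w₁ : Fin (n + 1) → k) (r : Fin (n + 1)) :
    (lineParam w₀ w₁ r).IsHomogeneous 1 :=
  (isHomogeneous_C_mul_X _ _).add (isHomogeneous_C_mul_X _ _)

lemma eval_smul_add_smul (w₀ w₁ : Fin (n + 1) → k) (a b : k) (f : PR k n) :
    eval (a • w₀ + b • w₁) f = eval ![a, b] (aeval (lineParam w₀ w₁) f) := by
  have hpt : a • w₀ + b • w₁ = fun r => aeval ![a, b] (lineParam w₀ w₁ r) := by
    funext r
    simp [lineParam, mul_comm]
  rw [← coe_aeval_eq_eval, ← coe_aeval_eq_eval, hpt]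
  change _ = (aeval ![a, b]).comp (aeval _) f
  rw [comp_aeval]
  rfl

/-- On a line, a form of degree `t` restricts to a binary form of degree `t`, so its values at
the points are combinations of the `t + 1` vectors `(a_j ^ i * b_j ^ (t - i))_j`. -/
lemma hilb_le_succ_of_collinear (v : Fin d → Fin (n + 1) → k) (w₀ w₁ : Fin (n + 1) → k)
    (hw : ∀ j, ∃ s t : k, v j = s • w₀ + t • w₁) (t : ℕ) :
    hilb (vanishIdeal (coneOver v Set.univ)) t ≤ t + 1 := by
  choose a b hab using hw
  let fam : Fin (t + 1) → Fin d → k := fun i j => a j ^ (i : ℕ) * b j ^ (t - i)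
  have hle : (homogeneousSubmodule (Fin (n + 1)) k t).map (evalPoints v) ≤
      Submodule.span k (Set.range fam) := by
    rintro _ ⟨f, hf, rfl⟩
    set g := aeval (lineParam w₀ w₁) f
    have hg : g.IsHomogeneous t := by
      simpa only [one_mul] using hf.aeval _ (lineParam_isHomogeneous w₀ w₁)
    have hval : evalPoints v f = ∑ α ∈ g.support, coeff α g • fun j => a j ^ α 0 * b j ^ α 1 := by
      funext j
      rw [evalPoints_apply, hab j, eval_smul_add_smul, eval_eq']
      simp [Fin.prod_univ_two, g]
    rw [hval]
    refine Submodule.sum_mem _ fun α hα => Submodule.smul_mem _ _ (Submodule.subset_span ?_)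
    have hdeg := hg.sum_eq_of_coeff_ne_zero (mem_support_iff.mp hα)
    rw [Fin.sum_univ_two] at hdeg
    refine ⟨⟨α 0, by omega⟩, funext fun j => ?_⟩
    simp only [fam, ← hdeg, Nat.add_sub_cancel_left]
  rw [hilb_vanishIdeal_coneOver]
  exact (Submodule.finrank_mono hle).trans ((finrank_range_le_card fam).trans (by simp))

end Points

theorem collinear_iff_Gnum_eq_card_general {k : Type} [Field k]
    {n d : ℕ} (hd : 1 < d)
    (v : Fin d → (Fin (n + 1) → k))
    (hdist : ∀ i j, i ≠ j → ∀ t : k, v i ≠ t • v j)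
    (I : Ideal (PR k n)) (hI : I = vanishIdeal (coneOver v Set.univ)) :
    (∃ w₀ w₁ : Fin (n + 1) → k, ∀ j, ∃ s t : k, v j = s • w₀ + t • w₁) ↔
      (Gnum I = d ∧ Mnum I = 1) := by
  subst hI
  have hv0 : ∀ j, v j ≠ 0 := fun j hj => by
    have : Nontrivial (Fin d) := Fin.nontrivial_iff_two_le.mpr hd
    obtain ⟨i, hij⟩ := exists_ne j
    exact hdist j i hij.symm 0 (by rw [hj, zero_smul])
  have hgeneric := fun t => min_le_hilb_vanishIdeal_coneOver v hv0 hdist t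
  constructor
  · rintro ⟨w₀, w₁, hw⟩
    have hH : ∀ t, hilb (vanishIdeal (coneOver v Set.univ)) t = min (t + 1) d := fun t =>
      le_antisymm (le_min (hilb_le_succ_of_collinear v w₀ w₁ hw t)
        (hilb_vanishIdeal_coneOver_le v t)) (hgeneric t)
    exact ⟨Gnum_eq_of_hilb_eq_min hd hH, Mnum_eq_one_of_hilb_eq_min hH⟩
  · rintro ⟨-, hM⟩
    by_contra hnc
    have hlast : hilb (vanishIdeal (coneOver v Set.univ)) (d - 1) = d - 1 + 1 := by
      have := hgeneric (d - 1)
      have := hilb_vanishIdeal_coneOver_le v (d - 1)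
      omega
    have hone := hilb_eq_succ_of_Mnum_eq_one hM (show 1 ≤ d - 1 by omega) hlast
    have hthree := (three_le_finrank_span_of_not_collinear hnc).trans
      (finrank_span_range_le_hilb_one v)
    omega

/-- Let `X` be a reduced set of `d > 1` distinct points of `ℙⁿ` (`n ≥ 2`),
given by nonzero, pairwise non-proportional homogeneous coordinate vectors `v j`, with
(saturated homogeneous radical) ideal `I_X` the vanishing ideal of the affine cone over `X`.
Then the points of `X` are collinear iff `G(X) = d` and `M(X) = 1`. -/
theorem collinear_iff_Gnum_eq_card {k : Type} [Field k] [IsAlgClosed k] [CharZero k]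
    {n d : ℕ} (hn : 2 ≤ n) (hd : 1 < d)
    (v : Fin d → (Fin (n + 1) → k)) (hv0 : ∀ j, v j ≠ 0)
    (hdist : ∀ i j, i ≠ j → ∀ t : k, v i ≠ t • v j)
    (I : Ideal (PR k n)) (hI : I = vanishIdeal (coneOver v Set.univ)) :
    (∃ w₀ w₁ : Fin (n + 1) → k, ∀ j, ∃ s t : k, v j = s • w₀ + t • w₁) ↔
      (Gnum I = d ∧ Mnum I = 1) :=
  collinear_iff_Gnum_eq_card_general hd v hdist I hI
end

section
/- Let d ≥ 2 and δ be integers with 1 < δ ≤ d, and let a_d ≥ a_{d−1} ≥ ··· ≥ a_δ ≥ 1 be integers. Set c = Σ_{i=δ}^{d} C(a_i+i, i) and c' = Σ_{i=δ}^{d} C(a_i+i−1, i−1) (these are the d-binomial expansion of c and the (d−1)-binomial expansion of c', respectively). Then c'_⟨d−1⟩ = c_⟨d⟩ − (c_⟨d⟩)_⟨d⟩. -/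
open MvPolynomial

/-!
If `k_d > ⋯ > k_δ ≥ δ ≥ 1`, then `∑ C(k_i, i)` already is the `d`-binomial expansion of its
value: the lower terms sum to less than `C(k_d, d - 1)`, so the greedy choice of the leading
term returns `k_d`. Hence Green's function lowers every `k_i` by one. Applied to `c`
(`k_i = a_i + i`), to `c_⟨d⟩` (`k_i = a_i + i - 1`, admissible since `a_δ ≥ 1`) and to `c'`
(in degree `d - 1`, `k_i = a_{i+1} + i`), the claim becomes Pascal's rule
`C(a_i + i - 1, i) = C(a_i + i - 2, i - 1) + C(a_i + i - 2, i)` summed over `i`.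
-/

section BinomialExpansion

open Finset

lemma self_le_choose_add {m d : ℕ} (hd : 1 ≤ d) (hdm : d ≤ m) : m ≤ m.choose d + d := by
  induction m, hdm using Nat.le_induction with
  | base => omega
  | succ m hdm ih =>
    have hpascal := Nat.choose_succ_left m d hd
    have hpos : 0 < m.choose (d - 1) := Nat.choose_pos (by omega)
    omega

lemma maxBinom_eq_s19 {c d m : ℕ} (hd : 1 ≤ d) (hdm : d ≤ m)
    (hle : m.choose d ≤ c) (hlt : c < (m + 1).choose d) : maxBinom c d = m := by
  have hmc : m ≤ c + d := (self_le_choose_add hd hdm).trans (by omega)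
  rw [maxBinom, Nat.findGreatest_eq_iff]
  refine ⟨hmc, fun _ => hle, fun n hmn _ hn => ?_⟩
  have := Nat.choose_le_choose d (show m + 1 ≤ n from hmn)
  omega

lemma greenFun_zero (d : ℕ) : greenFun 0 d = 0 := by
  rw [greenFun, dif_pos (Or.inl rfl)]

lemma greenFun_choose_add {k d s : ℕ} (hk : d + 1 ≤ k) (hs : s < k.choose d) :
    greenFun (k.choose (d + 1) + s) (d + 1) = (k - 1).choose (d + 1) + greenFun s d := by
  have hmax : maxBinom (k.choose (d + 1) + s) (d + 1) = k :=
    maxBinom_eq_s19 (by omega) hk (by omega) (by rw [Nat.choose_succ_succ']; omega)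
  have hpos : 0 < k.choose (d + 1) := Nat.choose_pos hk
  rw [greenFun, dif_neg (by omega), hmax, Nat.add_sub_cancel_left, Nat.add_sub_cancel]

lemma StrictMonoOn.le_apply_of_le_apply_left {δ n : ℕ} {k : ℕ → ℕ}
    (hk : StrictMonoOn k (Set.Icc δ n)) (hkδ : δ ≤ k δ) (hδn : δ ≤ n) : n ≤ k n := by
  induction n, hδn using Nat.le_induction with
  | base => exact hkδ
  | succ n hδn ih =>
    have hstep : k n < k (n + 1) := hk ⟨hδn, by omega⟩ ⟨by omega, le_rfl⟩ (by omega)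
    have := ih (hk.mono (Set.Icc_subset_Icc_right (by omega)))
    omega

lemma sum_choose_lt_choose {δ d : ℕ} {k : ℕ → ℕ} (hδ : 1 ≤ δ) (hδd : δ ≤ d + 1)
    (hk : StrictMonoOn k (Set.Icc δ (d + 1))) (hkδ : δ ≤ k δ) :
    ∑ i ∈ Icc δ d, (k i).choose i < (k (d + 1)).choose d := by
  induction d, (show δ - 1 ≤ d by omega) using Nat.le_induction with
  | base =>
    rw [Icc_eq_empty (by omega), sum_empty, Nat.sub_add_cancel hδ]
    exact Nat.choose_pos (by omega)
  | succ d hd ih =>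
    have hstep : k (d + 1) < k (d + 2) := hk ⟨by omega, by omega⟩ ⟨by omega, le_rfl⟩ (by omega)
    rw [sum_Icc_succ_top (by omega)]
    calc ∑ i ∈ Icc δ d, (k i).choose i + (k (d + 1)).choose (d + 1)
        < (k (d + 1)).choose d + (k (d + 1)).choose (d + 1) :=
          Nat.add_lt_add_right (ih (by omega) (hk.mono (Set.Icc_subset_Icc_right (by omega)))) _
      _ = (k (d + 1) + 1).choose (d + 1) := (Nat.choose_succ_succ' _ _).symm
      _ ≤ (k (d + 2)).choose (d + 1) := Nat.choose_le_choose _ hstep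

theorem greenFun_sum_choose {δ d : ℕ} {k : ℕ → ℕ} (hδ : 1 ≤ δ) (hδd : δ ≤ d + 1)
    (hk : StrictMonoOn k (Set.Icc δ d)) (hkδ : δ ≤ k δ) :
    greenFun (∑ i ∈ Icc δ d, (k i).choose i) d = ∑ i ∈ Icc δ d, (k i - 1).choose i := by
  induction d, (show δ - 1 ≤ d by omega) using Nat.le_induction with
  | base => rw [Icc_eq_empty (by omega), sum_empty, sum_empty, greenFun_zero]
  | succ d hd ih =>
    rw [sum_Icc_succ_top (by omega), sum_Icc_succ_top (by omega), add_comm,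
      greenFun_choose_add (hk.le_apply_of_le_apply_left hkδ (by omega))
        (sum_choose_lt_choose hδ (by omega) hk hkδ),
      ih (by omega) (hk.mono (Set.Icc_subset_Icc_right (by omega))), add_comm]

lemma sum_Icc_add_one_add_one {M : Type*} [AddCommMonoid M] (m n : ℕ) (f : ℕ → M) :
    ∑ i ∈ Icc (m + 1) (n + 1), f i = ∑ i ∈ Icc m n, f (i + 1) := by
  rw [← map_add_right_Icc, sum_map]
  rfl

end BinomialExpansion

theorem green_of_shift_general (d δ : ℕ) (hδ : 1 < δ) (hδd : δ ≤ d)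
    (a : ℕ → ℕ) (hmono : MonotoneOn a (Set.Icc δ d)) (ha : 1 ≤ a δ) :
    greenFun (∑ i ∈ Finset.Icc δ d, Nat.choose (a i + i - 1) (i - 1)) (d - 1) =
      greenFun (∑ i ∈ Finset.Icc δ d, Nat.choose (a i + i) i) d -
        greenFun (greenFun (∑ i ∈ Finset.Icc δ d, Nat.choose (a i + i) i) d) d := by
  have green_c : greenFun (∑ i ∈ Finset.Icc δ d, (a i + i).choose i) d =
      ∑ i ∈ Finset.Icc δ d, (a i + i - 1).choose i :=
    greenFun_sum_choose (by omega) (by omega)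
      (fun i hi j hj hij => by have := hmono hi hj hij.le; omega) (by omega)
  have green_green_c : greenFun (∑ i ∈ Finset.Icc δ d, (a i + i - 1).choose i) d =
      ∑ i ∈ Finset.Icc δ d, (a i + i - 1 - 1).choose i :=
    greenFun_sum_choose (by omega) (by omega)
      (fun i hi j hj hij => by have := hmono hi hj hij.le; have := hi.1; omega) (by omega)
  obtain ⟨δ', rfl⟩ : ∃ δ', δ = δ' + 1 := ⟨δ - 1, by omega⟩
  obtain ⟨d', rfl⟩ : ∃ d', d = d' + 1 := ⟨d - 1, by omega⟩
  have green_c' : greenFun (∑ i ∈ Finset.Icc (δ' + 1) (d' + 1), (a i + i - 1).choose (i - 1)) d' =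
      ∑ j ∈ Finset.Icc δ' d', (a (j + 1) + j - 1).choose j := by
    simp only [sum_Icc_add_one_add_one, ← add_assoc, Nat.add_sub_cancel]
    exact greenFun_sum_choose (by omega) (by omega)
      (fun i ⟨hi, hi'⟩ j ⟨hj, hj'⟩ hij => by
        have := hmono ⟨by omega, by omega⟩ ⟨by omega, by omega⟩ (by omega : i + 1 ≤ j + 1)
        omega)
      (by omega)
  have hpascal : ∑ i ∈ Finset.Icc (δ' + 1) (d' + 1), (a i + i - 1).choose i =
      ∑ j ∈ Finset.Icc δ' d', (a (j + 1) + j - 1).choose j +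
        ∑ i ∈ Finset.Icc (δ' + 1) (d' + 1), (a i + i - 1 - 1).choose i := by
    simp only [sum_Icc_add_one_add_one, ← Finset.sum_add_distrib]
    refine Finset.sum_congr rfl fun j hj => ?_
    have hj : 1 ≤ j := by rw [Finset.mem_Icc] at hj; omega
    rw [show a (j + 1) + (j + 1) - 1 = a (j + 1) + j - 1 + 1 by omega, Nat.add_sub_cancel,
      Nat.choose_succ_succ']
  rw [Nat.add_sub_cancel, green_c', green_c, green_green_c, hpascal, Nat.add_sub_cancel]

/-- Let `d ≥ 2`, `1 < δ ≤ d`, and `a_d ≥ a_{d−1} ≥ ⋯ ≥ a_δ ≥ 1`. Set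
`c = Σ_{i=δ}^d C(a_i+i,i)` and `c' = Σ_{i=δ}^d C(a_i+i−1,i−1)` (the `d`- and
`(d−1)`-binomial expansions of `c` and `c'`). Then `c'_⟨d−1⟩ = c_⟨d⟩ − (c_⟨d⟩)_⟨d⟩`. -/
theorem green_of_shift (d δ : ℕ) (hd : 2 ≤ d) (hδ : 1 < δ) (hδd : δ ≤ d)
    (a : ℕ → ℕ) (hmono : MonotoneOn a (Set.Icc δ d)) (ha : 1 ≤ a δ) :
    greenFun (∑ i ∈ Finset.Icc δ d, Nat.choose (a i + i - 1) (i - 1)) (d - 1) =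
      greenFun (∑ i ∈ Finset.Icc δ d, Nat.choose (a i + i) i) d -
        greenFun (greenFun (∑ i ∈ Finset.Icc δ d, Nat.choose (a i + i) i) d) d :=
  green_of_shift_general d δ hδ hδd a hmono ha
end
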